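/- Let β ∈ K with ‖β − b₁‖ < 1/(4√2) and let i ≥ 1 be an integer. (1) If x ∈ K satisfies ‖x − c₁‖ = ρ_{i+1} (i.e. x ∈ Ψ_{i+1}), then ‖R_β^{∘3}(x) − c₁‖ = ρ_i (i.e. R_β^{∘3}(x) ∈ Ψ_i). (2) If x ∈ K satisfies ‖x‖ = 2^{−(i+1)}/√2 (i.e. x ∈ Γ_{i+1}), then ‖R_β(x)‖ = 2^{−i}/√2 (i.e. R_β(x) ∈ Γ_i). -/

import Mathlib

open IsUltrametricDist

section Helpers

variable {K : Type*} [NormedField K] [IsUltrametricDist K]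

private lemma udom {x y : K} (h : ‖y‖ < ‖x‖) : ‖x + y‖ = ‖x‖ := by
  rw [norm_add_eq_max_of_norm_ne_norm (by linarith : ‖x‖ ≠ ‖y‖)]
  exact max_eq_left h.le

private lemma udol {x y : K} (h : ‖y‖ < ‖x‖) : ‖x - y‖ = ‖x‖ := by
  rw [sub_eq_add_neg]
  exact udom (by rwa [norm_neg])

private lemma udor {x y : K} (h : ‖x‖ < ‖y‖) : ‖x - y‖ = ‖y‖ := by
  rw [show x - y = -(y - x) by ring, norm_neg]
  exact udol h

private lemma umax (x y : K) : ‖x + y‖ ≤ max ‖x‖ ‖y‖ := norm_add_le_max x y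

private lemma usub (x y : K) : ‖x - y‖ ≤ max ‖x‖ ‖y‖ := by
  rw [sub_eq_add_neg]
  simpa using norm_add_le_max x (-y)

private lemma udom3 {x y z : K} (hy : ‖y‖ < ‖x‖) (hz : ‖z‖ < ‖x‖) :
    ‖x + y + z‖ = ‖x‖ := by
  rw [add_assoc]
  exact udom (lt_of_le_of_lt (umax y z) (max_lt hy hz))

/-- The core difference formula for the rational map. -/
private lemma stepN {a : K} (R : K → K → K)
    (hRdef : ∀ β z, R β z = (z ^ 2 - z) / (β * z - 1 / a))
    (b y c : K) (nn n1 n2 : ℝ)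
    (hnn : ‖b*y*c - (y + c - 1)/a‖ = nn)
    (h1 : ‖b*y - 1/a‖ = n1) (h2' : ‖b*c - 1/a‖ = n2)
    (h1p : 0 < n1) (h2p : 0 < n2) :
    ‖R b y - R b c‖ = ‖y - c‖ * nn / (n1 * n2) := by
  have hy0 : b*y - 1/a ≠ 0 := by
    intro h; rw [h, norm_zero] at h1; linarith
  have hc0 : b*c - 1/a ≠ 0 := by
    intro h; rw [h, norm_zero] at h2'; linarith
  rw [hRdef, hRdef, show (y^2 - y)/(b*y - 1/a) - (c^2 - c)/(b*c - 1/a)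
      = (y - c) * (b*y*c - (y + c - 1)/a) / ((b*y - 1/a) * (b*c - 1/a)) by
    rw [div_sub_div _ _ hy0 hc0]; congr 1; ring]
  rw [norm_div, norm_mul, norm_mul, hnn, h1, h2']

/-- The parameter-shift formula for the rational map. -/
private lemma shiftN {a : K} (R : K → K → K)
    (hRdef : ∀ β z, R β z = (z ^ 2 - z) / (β * z - 1 / a))
    (b b₁ c : K) (n1 n2 : ℝ)
    (h1 : ‖b*c - 1/a‖ = n1) (h2' : ‖b₁*c - 1/a‖ = n2)
    (h1p : 0 < n1) (h2p : 0 < n2) :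
    ‖R b c - R b₁ c‖ = ‖c^2 - c‖ * ‖b - b₁‖ * ‖c‖ / (n1 * n2) := by
  have hy0 : b*c - 1/a ≠ 0 := by
    intro h; rw [h, norm_zero] at h1; linarith
  have hc0 : b₁*c - 1/a ≠ 0 := by
    intro h; rw [h, norm_zero] at h2'; linarith
  rw [hRdef, hRdef, show (c^2 - c)/(b*c - 1/a) - (c^2 - c)/(b₁*c - 1/a)
      = (c^2 - c) * ((b₁ - b) * c) / ((b*c - 1/a) * (b₁*c - 1/a)) by
    rw [div_sub_div _ _ hy0 hc0]; congr 1; ring]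
  rw [norm_div, norm_mul, norm_mul, norm_mul, norm_sub_rev b₁ b, h1, h2', mul_assoc]

/-- Step A: quadratic contraction at the critical sphere. -/
private lemma stepA_lem {a b₁ c₁ : K} {s : ℝ} (R : K → K → K)
    (hRdef : ∀ β z, R β z = (z ^ 2 - z) / (β * z - 1 / a))
    (hc₁ : b₁ * c₁ ^ 2 - (2 / a) * c₁ + 1 / a = 0)
    (e1 : ‖b₁*c₁ - 1/a‖ = ‖c₁‖) (hia : ‖1/a‖ = 1/2)
    (ht_pos : 0 < ‖c₁‖) (ht_lt1 : ‖c₁‖ < 1) (ht_half : 1/2 < ‖c₁‖)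
    (hst : s * ‖c₁‖ = 1)
    (b z : K) (hbn : ‖b‖ = 1) (hcase : b = b₁ ∨ ‖b - b₁‖ * ‖c₁‖ < ‖z - c₁‖)
    (hlt : ‖z - c₁‖ < ‖c₁‖) : ‖R b z - R b c₁‖ = s * ‖z - c₁‖^2 := by
  have hz : ‖z‖ = ‖c₁‖ := by
    rw [show z = c₁ + (z - c₁) by ring, udom hlt]
  have hnum : ‖b*z*c₁ - (z + c₁ - 1)/a‖ = ‖z - c₁‖ * ‖c₁‖ := by
    have key : b*z*c₁ - (z + c₁ - 1)/a
        = (z - c₁) * (b₁*c₁ - 1/a) + ((b₁ * c₁ ^ 2 - (2 / a) * c₁ + 1 / a)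
          + (b - b₁)*(c₁*z)) := by ring
    rw [key, hc₁, zero_add]
    rcases hcase with h | h
    · rw [h, sub_self, zero_mul, add_zero, norm_mul, e1]
    · have hside : ‖(b - b₁)*(c₁*z)‖ < ‖(z - c₁) * (b₁*c₁ - 1/a)‖ := by
        rw [norm_mul, norm_mul, hz, norm_mul, e1]
        nlinarith [norm_nonneg (b - b₁), ht_pos, ht_lt1]
      rw [udom hside, norm_mul, e1]
  have hbz : ‖b*z‖ = ‖c₁‖ := by rw [norm_mul, hbn, hz, one_mul]
  have hd1 : ‖b*z - 1/a‖ = ‖c₁‖ := by rw [udol (by rw [hia, hbz]; linarith), hbz]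
  have hbc : ‖b*c₁‖ = ‖c₁‖ := by rw [norm_mul, hbn, one_mul]
  have hd2 : ‖b*c₁ - 1/a‖ = ‖c₁‖ := by rw [udol (by rw [hia, hbc]; linarith), hbc]
  rw [stepN R hRdef b z c₁ _ _ _ hnum hd1 hd2 ht_pos ht_pos,
    div_eq_iff (ne_of_gt (mul_pos ht_pos ht_pos))]
  linear_combination (-(‖z - c₁‖^2 * ‖c₁‖)) * hst

/-- Step B: isometric behaviour near `c₂`. -/
private lemma stepB_lem {a c₂ : K} (R : K → K → K)
    (hRdef : ∀ β z, R β z = (z ^ 2 - z) / (β * z - 1 / a))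
    (hia : ‖1/a‖ = 1/2) (ha : ‖a‖ = 2) (nc2 : ‖c₂‖ = 1)
    (b y : K) (hbn : ‖b‖ = 1) (hy : ‖y - c₂‖ ≤ 1/4) :
    ‖R b y - R b c₂‖ = ‖y - c₂‖ := by
  have hyn : ‖y‖ = 1 := by
    rw [show y = c₂ + (y - c₂) by ring, udom (by rw [nc2]; linarith), nc2]
  have hbyc : ‖b*y*c₂‖ = 1 := by rw [norm_mul, norm_mul, hbn, hyn, nc2]; norm_num
  have hnum : ‖b*y*c₂ - (y + c₂ - 1)/a‖ = 1 := by
    have hside : ‖(y + c₂ - 1)/a‖ < ‖b*y*c₂‖ := by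
      rw [hbyc, norm_div, ha]
      have h1 : ‖y + c₂ - 1‖ ≤ 1 := by
        refine (usub _ _).trans (max_le ((umax _ _).trans (max_le ?_ ?_)) ?_) <;>
          simp [hyn, nc2]
      linarith
    rw [udol hside, hbyc]
  have hby : ‖b*y‖ = 1 := by rw [norm_mul, hbn, hyn, one_mul]
  have hd1 : ‖b*y - 1/a‖ = 1 := by rw [udol (by rw [hia, hby]; norm_num), hby]
  have hbc2 : ‖b*c₂‖ = 1 := by rw [norm_mul, hbn, nc2, one_mul]
  have hd2 : ‖b*c₂ - 1/a‖ = 1 := by rw [udol (by rw [hia, hbc2]; norm_num), hbc2]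
  rw [stepN R hRdef b y c₂ _ _ _ hnum hd1 hd2 one_pos one_pos]
  norm_num

/-- Two iterations of `R b₁` starting in the small ball around `c₁`. -/
private lemma chain_lem {a b₁ c₁ c₂ c₃ : K} {s : ℝ} (R : K → K → K)
    (hc₂def : c₂ = R b₁ c₁) (hc₃def : c₃ = R b₁ c₂) (hb₁ : ‖b₁‖ = 1)
    (stepA' : ∀ b z : K, ‖b‖ = 1 → (b = b₁ ∨ ‖b - b₁‖ * ‖c₁‖ < ‖z - c₁‖) →
      ‖z - c₁‖ < ‖c₁‖ → ‖R b z - R b c₁‖ = s * ‖z - c₁‖^2)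
    (stepB' : ∀ b y : K, ‖b‖ = 1 → ‖y - c₂‖ ≤ 1/4 → ‖R b y - R b c₂‖ = ‖y - c₂‖)
    (s0 : 0 < s) (s1 : 1 < s) (h2slt : 1/(2*s) < ‖c₁‖)
    (h2seq : 1/(2*s) = s/4) (h4seq : 1/(4*s) = s/8) (s2 : s^2 = 2)
    (z : K) (hz : ‖z - c₁‖ ≤ 1/(2*s)) :
    ‖R b₁ (R b₁ z) - c₃‖ = s * ‖z - c₁‖^2 ∧ s * ‖z - c₁‖^2 ≤ 1/(4*s) := by
  have hA := stepA' b₁ z hb₁ (Or.inl rfl) (lt_of_le_of_lt hz h2slt)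
  rw [← hc₂def] at hA
  have hbound : s * ‖z - c₁‖^2 ≤ 1/(4*s) := by
    have h0 := norm_nonneg (z - c₁)
    have hsq : ‖z - c₁‖^2 ≤ (1/(2*s))^2 := by nlinarith
    rw [h4seq]
    rw [h2seq] at hsq
    nlinarith
  have hB := stepB' b₁ (R b₁ z) hb₁ (by rw [hA]; nlinarith)
  rw [← hc₃def, hA] at hB
  exact ⟨hB, hbound⟩

set_option maxHeartbeats 1600000 in
/-- `‖c₃‖ ≤ 1/2`, extracted from the periodicity of the small ball. -/
private lemma tau_lem {a b₁ c₁ c₂ c₃ c₄ ξ : K} {s : ℝ} (R : K → K → K)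
    (hRdef : ∀ β z, R β z = (z ^ 2 - z) / (β * z - 1 / a))
    (hper : (R b₁)^[3] '' Metric.closedBall c₁ (1/(2*s)) =
      Metric.closedBall c₁ (1/(2*s)))
    (hc₂def : c₂ = R b₁ c₁) (hc₃def : c₃ = R b₁ c₂) (hc₄def : c₄ = R b₁ c₃)
    (chain' : ∀ z : K, ‖z - c₁‖ ≤ 1/(2*s) →
      ‖R b₁ (R b₁ z) - c₃‖ = s * ‖z - c₁‖^2 ∧ s * ‖z - c₁‖^2 ≤ 1/(4*s))
    (hc4c1 : ‖c₄ - c₁‖ ≤ 1/(2*s)) (hξn : ‖ξ‖ = 1/(2*s)) (hτ1 : ‖c₃‖ ≤ 1)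
    (hb₁ : ‖b₁‖ = 1) (hia : ‖1/a‖ = 1/2) (ha : ‖a‖ = 2)
    (s0 : 0 < s) (s1 : 1 < s) (h2seq : 1/(2*s) = s/4) (h4seq : 1/(4*s) = s/8)
    (h4slt : 1/(4*s) < 1/2) :
    ‖c₃‖ ≤ 1/2 := by
  by_contra hτ
  push_neg at hτ
  have hiter3 : ∀ (f : K → K) (w : K), f^[3] w = f (f (f w)) := fun f w => rfl
  have hmem : c₄ + ξ ∈ Metric.closedBall c₁ (1/(2*s)) := by
    rw [Metric.mem_closedBall, dist_eq_norm,
      show c₄ + ξ - c₁ = (c₄ - c₁) + ξ by ring]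
    exact (umax _ _).trans (max_le hc4c1 hξn.le)
  rw [← hper] at hmem
  obtain ⟨z', hz'B, hz'⟩ := hmem
  rw [hiter3] at hz'
  rw [Metric.mem_closedBall, dist_eq_norm] at hz'B
  obtain ⟨hC, hCb⟩ := chain' z' hz'B
  obtain ⟨w, hwdef⟩ : ∃ w : K, w = R b₁ (R b₁ z') := ⟨_, rfl⟩
  rw [← hwdef] at hC hz'
  have hwc3 : ‖w - c₃‖ ≤ 1/(4*s) := by rw [hC]; exact hCb
  have hwn : ‖w‖ = ‖c₃‖ := by
    rw [show w = c₃ + (w - c₃) by ring, udom (lt_of_le_of_lt hwc3 (by linarith))]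
  have hnumle : ‖b₁*w*c₃ - (w + c₃ - 1)/a‖ ≤ max (‖c₃‖^2) (1/2) := by
    refine (usub _ _).trans (max_le_max ?_ ?_)
    · rw [norm_mul, norm_mul, hb₁, one_mul, hwn, sq]
    · rw [norm_div, ha]
      have h1 : ‖w + c₃ - 1‖ ≤ 1 := by
        refine (usub _ _).trans
          (max_le ((umax _ _).trans (max_le ?_ ?_)) (by rw [norm_one]))
        · rw [hwn]; exact hτ1
        · exact hτ1
      linarith
  have hbw : ‖b₁*w‖ = ‖c₃‖ := by rw [norm_mul, hb₁, hwn, one_mul]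
  have hd1 : ‖b₁*w - 1/a‖ = ‖c₃‖ := by rw [udol (by rw [hia, hbw]; linarith), hbw]
  have hbc3 : ‖b₁*c₃‖ = ‖c₃‖ := by rw [norm_mul, hb₁, one_mul]
  have hd2 : ‖b₁*c₃ - 1/a‖ = ‖c₃‖ := by rw [udol (by rw [hia, hbc3]; linarith), hbc3]
  have hc3pos : (0:ℝ) < ‖c₃‖ := by linarith
  have hfinal := stepN R hRdef b₁ w c₃ _ _ _ rfl hd1 hd2 hc3pos hc3pos
  rw [← hc₄def, hz', show c₄ + ξ - c₄ = ξ by ring, hξn,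
    eq_div_iff (ne_of_gt (mul_pos hc3pos hc3pos))] at hfinal
  have hN0 := norm_nonneg (b₁*w*c₃ - (w + c₃ - 1)/a)
  have hWN : ‖w - c₃‖ * ‖b₁*w*c₃ - (w + c₃ - 1)/a‖ ≤ (1/(4*s)) * max (‖c₃‖^2) (1/2) :=
    mul_le_mul hwc3 hnumle hN0 (by positivity : (0:ℝ) ≤ 1/(4*s))
  rw [← hfinal, h2seq, h4seq] at hWN
  have h2τ : 2 * ‖c₃‖^2 ≤ max (‖c₃‖^2) (1/2) := by
    nlinarith [le_max_right (‖c₃‖^2) (1/2)]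
  rcases max_cases (‖c₃‖^2) (1/2) with ⟨hm, _⟩ | ⟨hm, _⟩ <;> rw [hm] at h2τ <;> nlinarith

set_option maxHeartbeats 1600000 in
/-- `‖b₁c₃ - 1/a‖ = 1/2`, extracted from the periodicity of the small ball. -/
private lemma d_lem {a b₁ c₁ c₂ c₃ c₄ ξ : K} {s : ℝ} (R : K → K → K)
    (hRdef : ∀ β z, R β z = (z ^ 2 - z) / (β * z - 1 / a))
    (hper : (R b₁)^[3] '' Metric.closedBall c₁ (1/(2*s)) =
      Metric.closedBall c₁ (1/(2*s)))
    (hc₂def : c₂ = R b₁ c₁) (hc₃def : c₃ = R b₁ c₂) (hc₄def : c₄ = R b₁ c₃)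
    (chain' : ∀ z : K, ‖z - c₁‖ ≤ 1/(2*s) →
      ‖R b₁ (R b₁ z) - c₃‖ = s * ‖z - c₁‖^2 ∧ s * ‖z - c₁‖^2 ≤ 1/(4*s))
    (hc4c1 : ‖c₄ - c₁‖ ≤ 1/(2*s)) (hξn : ‖ξ‖ = 1/(2*s)) (htau : ‖c₃‖ ≤ 1/2)
    (hb₁ : ‖b₁‖ = 1) (hia : ‖1/a‖ = 1/2) (ha : ‖a‖ = 2)
    (h2slt : 1/(2*s) < ‖c₁‖)
    (s0 : 0 < s) (s1 : 1 < s) (s2 : s^2 = 2)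
    (h2seq : 1/(2*s) = s/4) (h4seq : 1/(4*s) = s/8) (h4slt : 1/(4*s) < 1/2) :
    ‖b₁*c₃ - 1/a‖ = 1/2 := by
  have hiter3 : ∀ (f : K → K) (w : K), f^[3] w = f (f (f w)) := fun f w => rfl
  have hbc3n : ‖b₁*c₃‖ = ‖c₃‖ := by rw [norm_mul, hb₁, one_mul]
  have hdle : ‖b₁*c₃ - 1/a‖ ≤ 1/2 :=
    (usub _ _).trans (max_le (by rw [hbc3n]; exact htau) hia.le)
  rcases eq_or_lt_of_le hdle with h | hdlt
  · exact h
  exfalso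
  have hz1 : ‖(c₁ + ξ) - c₁‖ = 1/(2*s) := by rw [add_sub_cancel_left]; exact hξn
  obtain ⟨hC, hCb⟩ := chain' (c₁ + ξ) hz1.le
  obtain ⟨w, hwdef⟩ : ∃ w : K, w = R b₁ (R b₁ (c₁ + ξ)) := ⟨_, rfl⟩
  rw [← hwdef] at hC
  have hws : s*((1/(2*s))^2) = 1/(4*s) := by
    field_simp
    ring
  have hwc3 : ‖w - c₃‖ = 1/(4*s) := by rw [hC, hz1, hws]
  have hmem : ‖R b₁ w - c₁‖ ≤ 1/(2*s) := by
    have h1 : (R b₁)^[3] (c₁ + ξ) ∈ (R b₁)^[3] '' Metric.closedBall c₁ (1/(2*s)) :=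
      Set.mem_image_of_mem _ (by rw [Metric.mem_closedBall, dist_eq_norm]; exact hz1.le)
    rw [hper, Metric.mem_closedBall, dist_eq_norm] at h1
    rwa [hiter3, ← hwdef] at h1
  have hRw4 : ‖R b₁ w - c₄‖ ≤ 1/(2*s) := by
    rw [show R b₁ w - c₄ = (R b₁ w - c₁) - (c₄ - c₁) by ring]
    exact (usub _ _).trans (max_le hmem hc4c1)
  by_cases hz0 : b₁*c₃ - 1/a = 0
  · have hc40 : c₄ = 0 := by rw [hc₄def, hRdef, hz0, div_zero]
    rw [hc40, zero_sub, norm_neg] at hc4c1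
    linarith
  by_cases hw0 : b₁*w - 1/a = 0
  · have hzero : R b₁ w = 0 := by rw [hRdef, hw0, div_zero]
    rw [hzero, zero_sub, norm_neg] at hRw4
    have : ‖c₁‖ ≤ 1/(2*s) := by
      rw [show c₁ = c₄ - (c₄ - c₁) by ring]
      exact (usub _ _).trans (max_le hRw4 hc4c1)
    linarith
  have hd0 : 0 < ‖b₁*c₃ - 1/a‖ := norm_pos_iff.mpr hz0
  have hD0 : 0 < ‖b₁*w - 1/a‖ := norm_pos_iff.mpr hw0
  have hwle : ‖w‖ ≤ 1/2 := by
    rw [show w = c₃ + (w - c₃) by ring]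
    exact (umax _ _).trans (max_le htau (by rw [hwc3]; linarith))
  have hw1 : ‖w + c₃ - 1‖ = 1 := by
    have hside : ‖w + c₃‖ < ‖(-1 : K)‖ := by
      rw [norm_neg, norm_one]
      exact lt_of_le_of_lt ((umax _ _).trans (max_le hwle htau)) (by norm_num)
    rw [show w + c₃ - 1 = (-1 : K) + (w + c₃) by ring, udom hside, norm_neg, norm_one]
  have hnum : ‖b₁*w*c₃ - (w + c₃ - 1)/a‖ = 1/2 := by
    have hmain : ‖(w + c₃ - 1)/a‖ = 1/2 := by rw [norm_div, ha, hw1]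
    have hsmall : ‖b₁*w*c₃‖ < 1/2 := by
      rw [norm_mul, norm_mul, hb₁, one_mul]
      nlinarith [norm_nonneg w, norm_nonneg c₃]
    rw [show b₁*w*c₃ - (w + c₃ - 1)/a = -((w + c₃ - 1)/a) + b₁*w*c₃ by ring,
      udom (by rw [norm_neg, hmain]; exact hsmall), norm_neg, hmain]
  have hDle : ‖b₁*w - 1/a‖ ≤ max (‖b₁*c₃ - 1/a‖) (1/(4*s)) := by
    rw [show b₁*w - 1/a = (b₁*c₃ - 1/a) + b₁*(w - c₃) by ring]
    exact (umax _ _).trans (max_le_max le_rfl (by rw [norm_mul, hb₁, one_mul, hwc3]))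
  have hfinal := stepN R hRdef b₁ w c₃ _ _ _ hnum rfl rfl hD0 hd0
  rw [← hc₄def, hwc3] at hfinal
  rw [hfinal, div_le_iff₀ (mul_pos hD0 hd0), h2seq, h4seq] at hRw4
  have hDd : 1/4 ≤ ‖b₁*w - 1/a‖ * ‖b₁*c₃ - 1/a‖ := by nlinarith
  rcases le_or_gt (‖b₁*c₃ - 1/a‖) (1/(4*s)) with hc | hc
  · have hDles : ‖b₁*w - 1/a‖ ≤ 1/(4*s) := hDle.trans (max_le hc le_rfl)
    rw [h4seq] at hDles hc
    nlinarith
  · have hDles : ‖b₁*w - 1/a‖ ≤ ‖b₁*c₃ - 1/a‖ := hDle.trans (max_le le_rfl hc.le)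
    nlinarith

/-- Part 2 computation. -/
private lemma part2_lem {a β : K} (R : K → K → K)
    (hRdef : ∀ β z, R β z = (z ^ 2 - z) / (β * z - 1 / a))
    (hia : ‖1/a‖ = 1/2) (hb : ‖β‖ = 1)
    (x : K) (hm0 : 0 < ‖x‖) (hm2 : ‖x‖ < 1/2) : ‖R β x‖ = 2*‖x‖ := by
  have hnum : ‖x^2 - x‖ = ‖x‖ := udor (by rw [norm_pow]; nlinarith)
  have hβx : ‖β*x‖ = ‖x‖ := by rw [norm_mul, hb, one_mul]
  have hden : ‖β*x - 1/a‖ = 1/2 := by rw [udor (by rw [hia, hβx]; exact hm2), hia]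
  rw [hRdef, norm_div, hnum, hden]
  ring

set_option maxHeartbeats 1600000 in
/-- The main chain: three iterations of `R β` on the sphere `Ψ_{i+1}`. -/
private lemma mainchain_lem {a b₁ c₁ c₂ c₃ c₄ β : K} {s q : ℝ} (R : K → K → K)
    (hRdef : ∀ β z, R β z = (z ^ 2 - z) / (β * z - 1 / a))
    (hc₂def : c₂ = R b₁ c₁) (hc₃def : c₃ = R b₁ c₂) (hc₄def : c₄ = R b₁ c₃)
    (stepA' : ∀ b z : K, ‖b‖ = 1 → (b = b₁ ∨ ‖b - b₁‖ * ‖c₁‖ < ‖z - c₁‖) →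
      ‖z - c₁‖ < ‖c₁‖ → ‖R b z - R b c₁‖ = s * ‖z - c₁‖^2)
    (stepB' : ∀ b y : K, ‖b‖ = 1 → ‖y - c₂‖ ≤ 1/4 → ‖R b y - R b c₂‖ = ‖y - c₂‖)
    (hb : ‖β‖ = 1) (hβ : ‖β - b₁‖ < 1/(4*s)) (hb₁ : ‖b₁‖ = 1)
    (e1 : ‖b₁*c₁ - 1/a‖ = ‖c₁‖) (hia : ‖1/a‖ = 1/2) (ha : ‖a‖ = 2)
    (ht_pos : 0 < ‖c₁‖) (ht_half : 1/2 < ‖c₁‖) (ht2 : ‖c₁‖^2 = 1/2)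
    (nc2 : ‖c₂‖ = 1) (hb1c2' : ‖b₁*c₂ - 1/a‖ = 1) (nc1sub : ‖c₁^2 - c₁‖ = ‖c₁‖)
    (htau : ‖c₃‖ ≤ 1/2) (hd : ‖b₁*c₃ - 1/a‖ = 1/2) (hc4c1 : ‖c₄ - c₁‖ ≤ 1/(2*s))
    (hq1 : 1/(2*s) < q) (hq2 : q^2 ≤ 1/(4*s))
    (s0 : 0 < s) (s1 : 1 < s) (s2 : s^2 = 2) (s32 : s < 3/2)
    (h2seq : 1/(2*s) = s/4) (h4seq : 1/(4*s) = s/8) (h4slt : 1/(4*s) < 1/2)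
    (x : K) (hx : ‖x - c₁‖ = q) :
    ‖R β (R β (R β x)) - c₁‖ = 2*(s*q^2) := by
  have hq1' : s/4 < q := by rw [← h2seq]; exact hq1
  have hq2' : q^2 ≤ s/8 := by rw [← h4seq]; exact hq2
  have hβ8 : ‖β - b₁‖ < s/8 := by rw [← h4seq]; exact hβ
  have hq0 : 0 < q := lt_trans (by positivity) hq1'
  have hqq : s/4*(s/4) < q*q := mul_lt_mul'' hq1' hq1' (by positivity) (by positivity)
  have hεsq : ‖β - b₁‖ < s*q^2 := by nlinarith only [hqq, s0, s2, hβ8]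
  have ht_lt1 : ‖c₁‖ < 1 := by nlinarith only [ht2, sq_nonneg (‖c₁‖ - 1)]
  have hqlt : ‖x - c₁‖ < ‖c₁‖ := by
    rw [hx]
    nlinarith only [hq2', s32, ht2, ht_pos, hq0, s0]
  have hA := stepA' β x hb (Or.inr (by
    rw [hx]
    nlinarith only [norm_nonneg (β - b₁), hβ8, ht_lt1, ht_pos, hq1', s0])) hqlt
  rw [hx] at hA
  have htne : ‖c₁‖ ≠ 0 := ht_pos.ne'
  have hβc₁ : ‖β*c₁‖ = ‖c₁‖ := by rw [norm_mul, hb, one_mul]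
  have hβc₁' : ‖β*c₁ - 1/a‖ = ‖c₁‖ := by rw [udol (by rw [hia, hβc₁]; linarith), hβc₁]
  have hshift1 := shiftN R hRdef β b₁ c₁ _ _ hβc₁' e1 ht_pos ht_pos
  have hsh1eq : ‖R β c₁ - R b₁ c₁‖ = ‖β - b₁‖ := by
    rw [hshift1, nc1sub, mul_comm ‖c₁‖ ‖β - b₁‖, mul_assoc, mul_div_assoc,
      div_self (mul_ne_zero htne htne), mul_one]
  have hy1 : ‖R β x - c₂‖ = s*q^2 := by
    rw [show R β x - c₂ = (R β x - R β c₁) + (R β c₁ - R b₁ c₁) by rw [hc₂def]; ring,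
      udom (by rw [hsh1eq, hA]; exact hεsq)]
    exact hA
  have hδ2 : s*q^2 ≤ 1/4 := by nlinarith only [hq2', s0, s2]
  have hδ1' : s/8 < s*q^2 := by nlinarith only [hqq, s0, s2]
  have hB := stepB' β (R β x) hb (by rw [hy1]; linarith only [hδ2])
  rw [hy1] at hB
  have hβc₂ : ‖β*c₂‖ = 1 := by rw [norm_mul, hb, nc2, one_mul]
  have hβc₂' : ‖β*c₂ - 1/a‖ = 1 := by rw [udol (by rw [hia, hβc₂]; norm_num), hβc₂]
  have hshift2 := shiftN R hRdef β b₁ c₂ _ _ hβc₂' hb1c2' one_pos one_pos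
  have hsh2le : ‖R β c₂ - R b₁ c₂‖ < s*q^2 := by
    rw [hshift2, nc2]
    have hcc : ‖c₂^2 - c₂‖ ≤ 1 := (usub _ _).trans (by rw [norm_pow, nc2]; norm_num)
    nlinarith only [norm_nonneg (β - b₁), hεsq, hcc, norm_nonneg (c₂^2 - c₂)]
  have hy2 : ‖R β (R β x) - c₃‖ = s*q^2 := by
    rw [show R β (R β x) - c₃ = (R β (R β x) - R β c₂) + (R β c₂ - R b₁ c₂) by
        rw [hc₃def]; ring,
      udom (by rw [hB]; exact hsh2le)]
    exact hB
  have hy2n : ‖R β (R β x)‖ ≤ 1/2 := by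
    rw [show R β (R β x) = c₃ + (R β (R β x) - c₃) by ring]
    exact (umax _ _).trans (max_le htau (by rw [hy2]; linarith only [hδ2]))
  have hw1 : ‖R β (R β x) + c₃ - 1‖ = 1 := by
    have hside : ‖R β (R β x) + c₃‖ < ‖(-1 : K)‖ := by
      rw [norm_neg, norm_one]
      exact lt_of_le_of_lt ((umax _ _).trans (max_le hy2n htau)) (by norm_num)
    rw [show R β (R β x) + c₃ - 1 = (-1 : K) + (R β (R β x) + c₃) by ring, udom hside,
      norm_neg, norm_one]
  have hnum3 : ‖β*(R β (R β x))*c₃ - (R β (R β x) + c₃ - 1)/a‖ = 1/2 := by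
    have hmain : ‖(R β (R β x) + c₃ - 1)/a‖ = 1/2 := by rw [norm_div, ha, hw1]
    have hsmall : ‖β*(R β (R β x))*c₃‖ < 1/2 := by
      rw [norm_mul, norm_mul, hb, one_mul]
      linarith only [mul_le_mul hy2n htau (norm_nonneg c₃) (by norm_num : (0:ℝ) ≤ 1/2)]
    rw [show β*(R β (R β x))*c₃ - (R β (R β x) + c₃ - 1)/a
        = -((R β (R β x) + c₃ - 1)/a) + β*(R β (R β x))*c₃ by ring,
      udom (by rw [norm_neg, hmain]; exact hsmall), norm_neg, hmain]
  have hden1 : ‖β*(R β (R β x)) - 1/a‖ = 1/2 := by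
    have hside : ‖b₁*(R β (R β x) - c₃) + (β - b₁)*(R β (R β x))‖ < 1/2 := by
      refine lt_of_le_of_lt (umax _ _) (max_lt ?_ ?_)
      · rw [norm_mul, hb₁, one_mul, hy2]; linarith only [hδ2]
      · rw [norm_mul]
        have hε2 : ‖β - b₁‖ ≤ 1/2 := le_of_lt (hβ.trans h4slt)
        linarith only [mul_le_mul hε2 hy2n
          (norm_nonneg (R β (R β x))) (by norm_num : (0:ℝ) ≤ 1/2)]
    rw [show β*(R β (R β x)) - 1/a
        = (b₁*c₃ - 1/a) + (b₁*(R β (R β x) - c₃) + (β - b₁)*(R β (R β x))) by ring,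
      udom (by rw [hd]; exact hside), hd]
  have hden2 : ‖β*c₃ - 1/a‖ = 1/2 := by
    have hside : ‖(β - b₁)*c₃‖ < 1/2 := by
      rw [norm_mul]
      have hε2 : ‖β - b₁‖ ≤ 1/2 := le_of_lt (hβ.trans h4slt)
      linarith only [mul_le_mul hε2 htau (norm_nonneg c₃) (by norm_num : (0:ℝ) ≤ 1/2)]
    rw [show β*c₃ - 1/a = (b₁*c₃ - 1/a) + (β - b₁)*c₃ by ring,
      udom (by rw [hd]; exact hside), hd]
  have hC := stepN R hRdef β (R β (R β x)) c₃ _ _ _ hnum3 hden1 hden2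
    (by norm_num) (by norm_num)
  rw [hy2] at hC
  have hCval : ‖R β (R β (R β x)) - R β c₃‖ = 2*(s*q^2) := by rw [hC]; ring
  have hshift3 := shiftN R hRdef β b₁ c₃ _ _ hden2 hd (by norm_num) (by norm_num)
  have hsh3 : ‖R β c₃ - c₄‖ ≤ 1/(2*s) := by
    rw [hc₄def, hshift3, h2seq]
    have hcc : ‖c₃^2 - c₃‖ ≤ 1/2 := (usub _ _).trans
      (max_le (by rw [norm_pow]; nlinarith only [htau, norm_nonneg c₃]) htau)
    have h1 : ‖c₃^2 - c₃‖ * ‖β - b₁‖ ≤ (1/2) * ‖β - b₁‖ :=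
      mul_le_mul_of_nonneg_right hcc (norm_nonneg _)
    have h2 : ‖c₃^2 - c₃‖ * ‖β - b₁‖ * ‖c₃‖ ≤ (1/2) * ‖β - b₁‖ * (1/2) :=
      mul_le_mul h1 htau (norm_nonneg c₃) (by positivity)
    rw [div_le_iff₀ (by norm_num : (0:ℝ) < 1/2 * (1/2))]
    linarith only [h2, hβ8, s0, norm_nonneg (β - b₁)]
  have h2δ : 1/(2*s) < 2*(s*q^2) := by rw [h2seq]; linarith only [hδ1']
  rw [show R β (R β (R β x)) - c₁
      = (R β (R β (R β x)) - R β c₃) + (R β c₃ - c₄) + (c₄ - c₁) by ring,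
    udom3 (by rw [hCval]; exact lt_of_le_of_lt hsh3 h2δ)
      (by rw [hCval]; exact lt_of_le_of_lt hc4c1 h2δ)]
  exact hCval

end Helpers


/-- The sequence `ρ_i = 2^(1/2^i − 3/2)`. -/
noncomputable def rhoSeq (i : ℕ) : ℝ := (2 : ℝ) ^ ((1 : ℝ) / 2 ^ i - 3 / 2)

private lemma rho_facts {i : ℕ} (hi : 1 ≤ i) :
    1 / (2 * Real.sqrt 2) < rhoSeq (i+1) ∧ (rhoSeq (i+1))^2 ≤ 1 / (4 * Real.sqrt 2) ∧
    rhoSeq i = 2 * Real.sqrt 2 * (rhoSeq (i+1))^2 := by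
  have h2 : (0:ℝ) < 2 := by norm_num
  have hsq : Real.sqrt 2 = (2:ℝ) ^ ((1:ℝ)/2) := Real.sqrt_eq_rpow 2
  have h22 : (2:ℝ) ^ ((2:ℝ)) = 4 := by
    rw [show (2:ℝ) = ((2:ℕ):ℝ) by norm_num, Real.rpow_natCast]; norm_num
  have h2s : (2:ℝ)^((3:ℝ)/2) = 2*Real.sqrt 2 := by
    rw [show (3:ℝ)/2 = 1 + 1/2 by norm_num, Real.rpow_add h2, Real.rpow_one, hsq]
  have h4s : (2:ℝ)^((5:ℝ)/2) = 4*Real.sqrt 2 := by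
    rw [show (5:ℝ)/2 = 2 + 1/2 by norm_num, Real.rpow_add h2, h22, hsq]
  have hpow : (0:ℝ) < 2 ^ (i+1) := by positivity
  have hA : (2:ℝ)/2^(i+1) = 1/2^i := by
    rw [pow_succ]; field_simp
  have hsq2 : (rhoSeq (i+1))^2 = (2:ℝ) ^ (((1:ℝ)/2^i - 3)) := by
    rw [rhoSeq, ← Real.rpow_natCast ((2:ℝ) ^ ((1:ℝ)/2^(i+1) - 3/2)) 2,
      ← Real.rpow_mul h2.le]
    congr 1
    push_cast
    rw [sub_mul]
    rw [show (1:ℝ)/2^(i+1) * 2 = 2/2^(i+1) by ring, hA]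
    ring
  refine ⟨?_, ?_, ?_⟩
  · rw [show (1:ℝ)/(2*Real.sqrt 2) = (2:ℝ)^(-((3:ℝ)/2)) by
      rw [Real.rpow_neg h2.le, h2s, one_div]]
    rw [rhoSeq]
    apply (Real.rpow_lt_rpow_left_iff (by norm_num : (1:ℝ) < 2)).mpr
    have : (0:ℝ) < 1/2^(i+1) := by positivity
    linarith
  · rw [hsq2, show (1:ℝ)/(4*Real.sqrt 2) = (2:ℝ)^(-((5:ℝ)/2)) by
      rw [Real.rpow_neg h2.le, h4s, one_div]]
    apply (Real.rpow_le_rpow_left_iff (by norm_num : (1:ℝ) < 2)).mpr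
    have h2i : (2:ℝ) ≤ 2^i := by
      calc (2:ℝ) = 2^1 := by norm_num
      _ ≤ 2^i := pow_le_pow_right₀ (by norm_num) hi
    have : (1:ℝ)/2^i ≤ 1/2 := by
      apply div_le_div_of_nonneg_left (by norm_num) (by norm_num) h2i
    linarith
  · rw [hsq2, ← h2s, ← Real.rpow_add h2, rhoSeq]
    congr 1
    ring

set_option maxHeartbeats 2000000 in
/-- For `‖β − b₁‖ < 1/(4√2)` and `i ≥ 1`:
(1) if `x ∈ Ψ_{i+1}` (i.e. `‖x − c₁‖ = ρ_{i+1}`) then `R_β^{∘3}(x) ∈ Ψ_i`;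
(2) if `x ∈ Γ_{i+1}` (i.e. `‖x‖ = 2^{−(i+1)}/√2`) then `R_β(x) ∈ Γ_i`. -/
theorem spheres_map_down
    {K : Type*} [NormedField K] [CompleteSpace K] [IsAlgClosed K] [IsUltrametricDist K]
    (h2 : ‖(2 : K)‖ = 1 / 2)
    (a b₁ c₁ : K) (ha : ‖a‖ = 2) (hb₁ : ‖b₁‖ = 1)
    (R : K → K → K) (hRdef : ∀ β z, R β z = (z ^ 2 - z) / (β * z - 1 / a))
    (hc₁ : b₁ * c₁ ^ 2 - (2 / a) * c₁ + 1 / a = 0)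
    (hper : (R b₁)^[3] '' Metric.closedBall c₁ (1 / (2 * Real.sqrt 2)) =
      Metric.closedBall c₁ (1 / (2 * Real.sqrt 2)))
    (β : K) (hβ : ‖β - b₁‖ < 1 / (4 * Real.sqrt 2))
    (i : ℕ) (hi : 1 ≤ i) :
    (∀ x : K, ‖x - c₁‖ = rhoSeq (i + 1) → ‖(R β)^[3] x - c₁‖ = rhoSeq i) ∧
    (∀ x : K, ‖x‖ = ((2 : ℝ) ^ (i + 1))⁻¹ / Real.sqrt 2 →
        ‖R β x‖ = ((2 : ℝ) ^ i)⁻¹ / Real.sqrt 2) := by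
  obtain ⟨hq1, hq2, hq3⟩ := rho_facts hi
  obtain ⟨s, hsdef⟩ : ∃ s, Real.sqrt 2 = s := ⟨_, rfl⟩
  rw [hsdef] at hβ hper hq1 hq2 hq3 ⊢
  have s0 : (0:ℝ) < s := hsdef ▸ (by positivity)
  have s2 : s^2 = 2 := by rw [← hsdef]; exact Real.sq_sqrt (by norm_num)
  have s1 : 1 < s := lt_of_pow_lt_pow_left₀ 2 s0.le (by rw [s2]; norm_num)
  have s32 : s < 3/2 := lt_of_pow_lt_pow_left₀ 2 (by norm_num) (by rw [s2]; norm_num)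
  have ha0 : a ≠ 0 := by
    intro h; rw [h, norm_zero] at ha; norm_num at ha
  have hia : ‖1/a‖ = 1/2 := by rw [norm_div, norm_one, ha]
  have h2a : ‖2/a‖ = 1/4 := by rw [norm_div, h2, ha]; norm_num
  have hb1c1sq : b₁ * c₁^2 = (2/a)*c₁ - 1/a := by linear_combination hc₁
  have hnb1c1sq : ‖c₁‖^2 = ‖(2/a)*c₁ - 1/a‖ := by
    rw [← hb1c1sq, norm_mul, hb₁, norm_pow, one_mul]
  have hn2ac1 : ‖(2/a)*c₁‖ = 1/4 * ‖c₁‖ := by rw [norm_mul, h2a]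
  have ht2 : ‖c₁‖^2 = 1/2 := by
    rcases lt_trichotomy (‖c₁‖) 2 with h | h | h
    · have hside : ‖(2/a)*c₁‖ < ‖(1/a : K)‖ := by rw [hn2ac1, hia]; linarith
      rw [hnb1c1sq, udor hside, hia]
    · have hle := (usub ((2/a)*c₁) (1/a)).trans
        (max_le (by rw [hn2ac1, h]; norm_num) hia.le :
          max ‖(2/a)*c₁‖ ‖(1/a : K)‖ ≤ 1/2)
      rw [← hnb1c1sq, h] at hle; norm_num at hle
    · have := hnb1c1sq.trans (udol (by rw [hn2ac1, hia]; linarith))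
      rw [hn2ac1] at this; nlinarith
  have ht0 : (0:ℝ) ≤ ‖c₁‖ := norm_nonneg _
  have ht_pos : 0 < ‖c₁‖ := lt_of_le_of_ne ht0 (fun h => by rw [← h] at ht2; norm_num at ht2)
  have hst : s * ‖c₁‖ = 1 := by
    refine (pow_left_inj₀ (by positivity) zero_le_one two_ne_zero).mp ?_
    rw [mul_pow, s2, ht2]; norm_num
  have ht_half : 1/2 < ‖c₁‖ := lt_of_pow_lt_pow_left₀ 2 ht0 (by rw [ht2]; norm_num)
  have ht_lt1 : ‖c₁‖ < 1 := lt_of_pow_lt_pow_left₀ 2 zero_le_one (by rw [ht2]; norm_num)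
  have hβ1 : 1/(4*s) < 1 := by rw [div_lt_one (by positivity)]; nlinarith
  have hb : ‖β‖ = 1 := by
    rw [show β = b₁ + (β - b₁) by ring, udom (by rw [hb₁]; linarith), hb₁]
  have e1 : ‖b₁*c₁ - 1/a‖ = ‖c₁‖ := by
    have key : b₁*c₁ - 1/a = c₁ * (b₁ + (b₁*c₁ - 2/a)) := by linear_combination -hc₁
    have hin : ‖b₁ + (b₁*c₁ - 2/a)‖ = 1 := by
      have hside : ‖b₁*c₁ - 2/a‖ < ‖b₁‖ := by
        rw [hb₁]
        refine lt_of_le_of_lt (usub _ _) (max_lt ?_ ?_)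
        · rw [norm_mul, hb₁, one_mul]; linarith
        · rw [h2a]; norm_num
      rw [udom hside, hb₁]
    rw [key, norm_mul, hin, mul_one]
  have nc1sub : ‖c₁^2 - c₁‖ = ‖c₁‖ := udor (by rw [norm_pow]; nlinarith)
  have h2seq : 1/(2*s) = s/4 := by
    rw [div_eq_div_iff (by positivity) (by norm_num)]; linear_combination (-2:ℝ)*s2
  have h4seq : 1/(4*s) = s/8 := by
    rw [div_eq_div_iff (by positivity) (by norm_num)]; linear_combination (-4:ℝ)*s2
  have h4slt : 1/(4*s) < 1/2 := by rw [h4seq]; linarith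
  have h2slt : 1/(2*s) < ‖c₁‖ := by rw [h2seq]; nlinarith
  -- the centers of the cycle of balls
  obtain ⟨c₂, hc₂def⟩ : ∃ c : K, c = R b₁ c₁ := ⟨_, rfl⟩
  obtain ⟨c₃, hc₃def⟩ : ∃ c : K, c = R b₁ c₂ := ⟨_, rfl⟩
  obtain ⟨c₄, hc₄def⟩ : ∃ c : K, c = R b₁ c₃ := ⟨_, rfl⟩
  have nc2 : ‖c₂‖ = 1 := by
    rw [hc₂def, hRdef, norm_div, nc1sub, e1, div_self ht_pos.ne']
  have hb1c2 : ‖b₁*c₂‖ = 1 := by rw [norm_mul, hb₁, nc2, one_mul]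
  have hb1c2' : ‖b₁*c₂ - 1/a‖ = 1 := by
    rw [udol (by rw [hia, hb1c2]; norm_num), hb1c2]
  have hτ1 : ‖c₃‖ ≤ 1 := by
    rw [hc₃def, hRdef, norm_div, hb1c2', div_one]
    exact (usub _ _).trans (max_le (by rw [norm_pow, nc2, one_pow]) nc2.le)
  -- instantiated step lemmas
  have stepA' := stepA_lem R hRdef hc₁ e1 hia ht_pos ht_lt1 ht_half hst
  have stepB' := stepB_lem R hRdef hia ha nc2
  have chain' := chain_lem (a := a) R hc₂def hc₃def hb₁ stepA' stepB' s0 s1 h2slt h2seq h4seq s2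
  have hiter3 : ∀ (f : K → K) (w : K), f^[3] w = f (f (f w)) := fun f w => rfl
  have hrad : (0:ℝ) ≤ 1/(2*s) := by positivity
  have hc4c1 : ‖c₄ - c₁‖ ≤ 1/(2*s) := by
    have h1 : (R b₁)^[3] c₁ ∈ (R b₁)^[3] '' Metric.closedBall c₁ (1/(2*s)) :=
      Set.mem_image_of_mem _ (Metric.mem_closedBall_self hrad)
    rw [hper, Metric.mem_closedBall, dist_eq_norm] at h1
    rwa [hiter3, ← hc₂def, ← hc₃def, ← hc₄def] at h1
  obtain ⟨ξ, hξ⟩ := IsAlgClosed.exists_pow_nat_eq (8:K) two_pos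
  have hξsq : ‖ξ‖^2 = 1/8 := by
    rw [← norm_pow, hξ, show (8:K) = 2^3 by norm_num, norm_pow, h2]; norm_num
  have hξn : ‖ξ‖ = 1/(2*s) := by
    refine (pow_left_inj₀ (norm_nonneg _) hrad two_ne_zero).mp ?_
    rw [hξsq, div_pow, one_pow, mul_pow, s2]; norm_num
  have htau : ‖c₃‖ ≤ 1/2 :=
    tau_lem R hRdef hper hc₂def hc₃def hc₄def chain' hc4c1 hξn hτ1 hb₁ hia ha
      s0 s1 h2seq h4seq h4slt
  have hd : ‖b₁*c₃ - 1/a‖ = 1/2 :=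
    d_lem R hRdef hper hc₂def hc₃def hc₄def chain' hc4c1 hξn htau hb₁ hia ha
      h2slt s0 s1 s2 h2seq h4seq h4slt
  constructor
  · intro x hx
    have hmain := mainchain_lem R hRdef hc₂def hc₃def hc₄def stepA' stepB' hb hβ hb₁
      e1 hia ha ht_pos ht_half ht2 nc2 hb1c2' nc1sub htau hd hc4c1 hq1 hq2
      s0 s1 s2 s32 h2seq h4seq h4slt x hx
    rw [hiter3, hmain, hq3]
    ring
  · intro x hx
    have hpow4 : (4:ℝ) ≤ 2^(i+1) := by
      calc (4:ℝ) = 2^2 := by norm_num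
      _ ≤ 2^(i+1) := pow_le_pow_right₀ (by norm_num) (by omega)
    have hm0 : 0 < ‖x‖ := by rw [hx]; exact div_pos (by positivity) s0
    have hinv : ((2:ℝ)^(i+1))⁻¹ ≤ 1/4 := by
      rw [show (1:ℝ)/4 = ((4:ℝ))⁻¹ by norm_num]
      exact inv_anti₀ (by norm_num) hpow4
    have hm2 : ‖x‖ < 1/2 := by
      rw [hx, div_lt_iff₀ s0]
      nlinarith only [hinv, s1, s0]
    rw [part2_lem R hRdef hia hb x hm0 hm2, hx, pow_succ]
    have h2i : ((2:ℝ)^i) ≠ 0 := by positivity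
    field_simp
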